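/- In the k-deficient roundabout exploration model with k ≥ 1, let t = ⌊N/(2k)⌋. Then at most 6k agents remain active after t steps: |A(t)| ≤ 6k. -/

import Mathlib

/-!
Put `T = ⌊N/(2k)⌋ < N`, so no agent wraps around the cycle and an agent blocked at `b` of the
first `T` steps has visited exactly `T + 1 - b` states. Non-redundancy makes the positions of the
active agents distinct, so at most `2k` of them are blocked per step, and it puts every state in
at most two visited intervals of active agents (of three intervals through a point, one is covered
by the other two). Summing over the active agents gives `|A(T)| (T + 1) ≤ 2N + 2kT`, which is
less than `6k (T + 1)` because `N < 2k (T + 1)`.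
-/

/-- The circular interval `⟨i, j⟩` on `Fin N`: all states encountered when moving
forward from `i` to `j` along the cycle `(0, 1, …, N-1, 0)`. -/
def cInt {N : ℕ} (i j : Fin N) : Set (Fin N) := {x | (x - i).val ≤ (j - i).val}

/-- The half-open circular interval `⟨i, j)` on `Fin N`, which excludes the right
endpoint `j`. -/
def cIntHalf {N : ℕ} (i j : Fin N) : Set (Fin N) := cInt i j \ {j}

/-- The roundabout exploration model on the state set `Fin N`:
`avail t` is the set of positions available at step `t` (steps `t = 1, …, N` are
relevant), `state i t` is the state of agent `a_i` after step `t`, and `active t`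
is the set of (indices of) active agents after step `t`. Agent `a_i` starts at
state `i`, moves forward one position (cyclically) at step `t` whenever its
current position is available, and stays put otherwise. Active agents satisfy:
initially all agents are active, the active sets are decreasing, elimination
preserves coverage of visited states, and every active agent is non-redundant. -/
structure Roundabout (N : ℕ) [NeZero N] where
  avail : ℕ → Set (Fin N)
  state : Fin N → ℕ → Fin N
  active : ℕ → Set (Fin N)
  state_zero : ∀ i, state i 0 = i
  state_succ_of_mem : ∀ i t, state i t ∈ avail (t + 1) → state i (t + 1) = state i t + 1
  state_succ_of_not_mem : ∀ i t, state i t ∉ avail (t + 1) → state i (t + 1) = state i t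
  active_zero : active 0 = Set.univ
  active_mono : ∀ t, active (t + 1) ⊆ active t
  active_cover : ∀ t, (⋃ j ∈ active (t + 1), cInt j (state j (t + 1)))
      = ⋃ j ∈ active t, cInt j (state j (t + 1))
  active_nonredundant : ∀ t, ∀ i ∈ active (t + 1),
      ¬ cInt i (state i (t + 1)) ⊆ ⋃ j ∈ active (t + 1) \ {i}, cInt j (state j (t + 1))

/-- `D_i(t)`, the set of states visited by agent `a_i` up to step `t`. -/
def Roundabout.visited {N : ℕ} [NeZero N] (R : Roundabout N) (i : Fin N) (t : ℕ) :
    Set (Fin N) := cInt i (R.state i t)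

/-- The roundabout model is `k`-deficient: at every step `t ∈ [N]`, at most `2k`
positions are unavailable. -/
def Roundabout.KDeficient {N : ℕ} [NeZero N] (R : Roundabout N) (k : ℕ) : Prop :=
  ∀ t : ℕ, 1 ≤ t → t ≤ N → ((R.avail t)ᶜ : Set (Fin N)).ncard ≤ 2 * k

theorem Fin.val_sub_eq_ite {N : ℕ} (a b : Fin N) :
    (a - b).val = if b.val ≤ a.val then a.val - b.val else N + a.val - b.val := by
  split_ifs with h
  · exact Fin.coe_sub_iff_le.2 h
  · exact Fin.coe_sub_iff_lt.2 (not_le.1 h)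

section CircularInterval

variable {N : ℕ}

theorem mem_cInt {i j x : Fin N} : x ∈ cInt i j ↔ (x - i).val ≤ (j - i).val := Iff.rfl

theorem cInt_eq_preimage [NeZero N] (i j : Fin N) :
    cInt i j = Equiv.subRight i ⁻¹' Set.Iic (j - i) := by
  ext x; simp [cInt]

theorem ncard_cInt [NeZero N] (i j : Fin N) : (cInt i j).ncard = (j - i).val + 1 := by
  rw [cInt_eq_preimage, Set.ncard_preimage_of_injective_subset_range (Equiv.injective _) (by simp),
    ← Finset.coe_Iic, Set.ncard_coe_finset, Fin.card_Iic]

theorem cInt_self [NeZero N] (i : Fin N) : cInt i i = {i} := by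
  ext x; simp [cInt, sub_eq_zero]

theorem cInt_subset_cInt_of_mem_right {i j x : Fin N} (h : x ∈ cInt i j) :
    cInt i x ⊆ cInt i j :=
  fun _ hy => mem_cInt.2 (le_trans hy h)

theorem cInt_subset_cInt_of_mem_left {i j x : Fin N} (h : x ∈ cInt i j) :
    cInt x j ⊆ cInt i j := by
  intro y hy
  simp only [mem_cInt, Fin.val_sub_eq_ite] at *
  have := i.isLt; have := j.isLt; have := x.isLt; have := y.isLt
  split_ifs at * <;> omega

theorem cInt_subset_cInt_of_val_sub_le {i i' j : Fin N} (h : (j - i').val ≤ (j - i).val) :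
    cInt i' j ⊆ cInt i j := by
  intro y hy
  simp only [mem_cInt, Fin.val_sub_eq_ite] at *
  have := i.isLt; have := i'.isLt; have := j.isLt; have := y.isLt
  split_ifs at * <;> omega

theorem cInt_subset_union_of_mem {i j x : Fin N} (h : x ∈ cInt i j) :
    cInt i j ⊆ cInt i x ∪ cInt x j := by
  intro y hy
  simp only [Set.mem_union, mem_cInt, Fin.val_sub_eq_ite] at *
  have := i.isLt; have := j.isLt; have := x.isLt; have := y.isLt
  split_ifs at * <;> omega

theorem mem_cInt_or_mem_cInt {i i' j : Fin N} (h : i ≠ i') :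
    i' ∈ cInt i j ∨ i ∈ cInt i' j := by
  have := Fin.val_ne_of_ne h
  simp only [mem_cInt, Fin.val_sub_eq_ite]
  have := i.isLt; have := i'.isLt; have := j.isLt
  split_ifs <;> omega

/-- An interval through `p` that starts no earlier than the interval from `i₁` and ends no later
than the interval to `j₂`, both through `p`, is covered by these two. -/
theorem cInt_subset_union_of_common_mem {p i j i₁ j₁ i₂ j₂ : Fin N} (hp : p ∈ cInt i j)
    (hp₁ : p ∈ cInt i₁ j₁) (hp₂ : p ∈ cInt i₂ j₂) (hi : (p - i).val ≤ (p - i₁).val)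
    (hj : j ∈ cInt p j₂) : cInt i j ⊆ cInt i₁ j₁ ∪ cInt i₂ j₂ :=
  (cInt_subset_union_of_mem hp).trans <| Set.union_subset_union
    ((cInt_subset_cInt_of_val_sub_le hi).trans (cInt_subset_cInt_of_mem_right hp₁))
    ((cInt_subset_cInt_of_mem_right hj).trans (cInt_subset_cInt_of_mem_left hp₂))

def IsIrredundant (S : Set (Fin N)) (e : Fin N → Fin N) : Prop :=
  ∀ i ∈ S, ¬ cInt i (e i) ⊆ ⋃ j ∈ S \ {i}, cInt j (e j)

namespace IsIrredundant

variable {S : Set (Fin N)} {e : Fin N → Fin N}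

theorem cInt_not_subset (h : IsIrredundant S e) {i j : Fin N} (hi : i ∈ S) (hj : j ∈ S)
    (hij : i ≠ j) : ¬ cInt i (e i) ⊆ cInt j (e j) := fun hsub =>
  h i hi <| hsub.trans <| Set.subset_biUnion_of_mem (u := fun j => cInt j (e j)) ⟨hj, hij.symm⟩

theorem injOn (h : IsIrredundant S e) : Set.InjOn e S := by
  intro i hi j hj he
  by_contra hij
  rcases mem_cInt_or_mem_cInt hij (j := e i) with hj' | hi'
  · exact h.cInt_not_subset hj hi (Ne.symm hij) (he ▸ cInt_subset_cInt_of_mem_left hj')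
  · exact h.cInt_not_subset hi hj hij (he ▸ cInt_subset_cInt_of_mem_left hi')

theorem card_le_two (h : IsIrredundant S e) {F : Finset (Fin N)} (hF : ↑F ⊆ S) {p : Fin N}
    (hp : ∀ w ∈ F, p ∈ cInt w (e w)) : F.card ≤ 2 := by
  by_contra! hF2
  have hne : F.Nonempty := Finset.card_pos.1 (by omega)
  obtain ⟨x, hxF, hx⟩ := F.exists_max_image (fun w => (p - w).val) hne
  obtain ⟨y, hyF, hy⟩ := F.exists_max_image (fun w => (e w - p).val) hne
  obtain ⟨z, hzF, hz⟩ : ∃ z ∈ F, z ∉ ({x, y} : Finset (Fin N)) :=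
    Finset.exists_mem_notMem_of_card_lt_card ((Finset.card_le_two).trans_lt hF2)
  simp only [Finset.mem_insert, Finset.mem_singleton, not_or] at hz
  refine h z (hF hzF) ((cInt_subset_union_of_common_mem (hp z hzF) (hp x hxF) (hp y hyF)
    (hx z hzF) (hy z hzF)).trans (Set.union_subset ?_ ?_))
  · exact Set.subset_biUnion_of_mem (u := fun j => cInt j (e j)) ⟨hF hxF, Ne.symm hz.1⟩
  · exact Set.subset_biUnion_of_mem (u := fun j => cInt j (e j)) ⟨hF hyF, Ne.symm hz.2⟩

theorem sum_ncard_le {s : Finset (Fin N)} (h : IsIrredundant ↑s e) :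
    ∑ w ∈ s, (cInt w (e w)).ncard ≤ 2 * N := by
  classical
  calc ∑ w ∈ s, (cInt w (e w)).ncard
      = ∑ w ∈ s, (Finset.univ.bipartiteAbove (fun w p => p ∈ cInt w (e w)) w).card := by
        refine Finset.sum_congr rfl fun w _ => ?_
        rw [← Set.ncard_coe_finset]
        simp [Finset.bipartiteAbove]
    _ = ∑ p, (s.bipartiteBelow (fun w p => p ∈ cInt w (e w)) p).card :=
        Finset.sum_card_bipartiteAbove_eq_sum_card_bipartiteBelow _
    _ ≤ ∑ _p : Fin N, 2 :=
        Finset.sum_le_sum fun _ _ => h.card_le_two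
          (Finset.coe_subset.2 (Finset.filter_subset _ _)) fun _ hw => (Finset.mem_filter.1 hw).2
    _ = 2 * N := by simp [mul_comm]

end IsIrredundant

end CircularInterval

namespace Roundabout

variable {N : ℕ} [NeZero N] (R : Roundabout N)

theorem isIrredundant_active (t : ℕ) : IsIrredundant (R.active t) (R.state · t) := by
  cases t with
  | zero =>
    intro i _ hsub
    simp only [R.state_zero, cInt_self, Set.singleton_subset_iff, Set.mem_iUnion] at hsub
    obtain ⟨j, ⟨_, hji⟩, hij⟩ := hsub
    exact hji hij.symm
  | succ t => exact R.active_nonredundant t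

theorem active_anti : Antitone R.active := antitone_nat_of_succ_le R.active_mono

open Classical in
/-- The steps at which agent `i` is blocked before time `t`; `τ` stands for step `τ + 1`. -/
noncomputable def blockedSteps (i : Fin N) (t : ℕ) : Finset ℕ :=
  {τ ∈ Finset.range t | R.state i τ ∉ R.avail (τ + 1)}

theorem val_sub_add_card_blockedSteps (i : Fin N) {t : ℕ} (ht : t < N) :
    (R.state i t - i).val + (R.blockedSteps i t).card = t := by
  classical
  induction t with
  | zero => simp [R.state_zero, blockedSteps]
  | succ t ih =>
    have ih := ih (by omega)
    have hsucc : (R.blockedSteps i (t + 1)).card = (R.blockedSteps i t).card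
        + if R.state i t ∈ R.avail (t + 1) then 0 else 1 := by
      simp only [blockedSteps, Finset.card_filter, Finset.sum_range_succ, ite_not]
    by_cases h : R.state i t ∈ R.avail (t + 1)
    · rw [hsucc, if_pos h, R.state_succ_of_mem i t h, add_sub_right_comm,
        Fin.val_add_one_of_lt' (by omega)]
      omega
    · rw [hsucc, if_neg h, R.state_succ_of_not_mem i t h]
      omega

theorem ncard_visited_add_card_blockedSteps (i : Fin N) {t : ℕ} (ht : t < N) :
    (R.visited i t).ncard + (R.blockedSteps i t).card = t + 1 := by
  have := R.val_sub_add_card_blockedSteps i ht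
  rw [visited, ncard_cInt]
  omega

variable {R}

open Classical in
theorem card_filter_blocked_le {k : ℕ} (hdef : R.KDeficient k) {s : Finset (Fin N)} {τ : ℕ}
    (hs : ↑s ⊆ R.active τ) (hτ : τ < N) :
    {w ∈ s | R.state w τ ∉ R.avail (τ + 1)}.card ≤ 2 * k := by
  rw [← Set.ncard_coe_finset]
  refine (Set.ncard_le_ncard_of_injOn (R.state · τ) (fun w hw => ?_) ?_ (Set.toFinite _)).trans
    (hdef (τ + 1) (by omega) hτ)
  · exact (Finset.mem_filter.1 hw).2
  · exact (R.isIrredundant_active τ).injOn.mono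
      ((Finset.coe_subset.2 (Finset.filter_subset _ _)).trans hs)

theorem sum_card_blockedSteps_le {k : ℕ} (hdef : R.KDeficient k) {s : Finset (Fin N)} {T : ℕ}
    (hs : ↑s ⊆ R.active T) (hT : T ≤ N) :
    ∑ w ∈ s, (R.blockedSteps w T).card ≤ T * (2 * k) := by
  classical
  calc ∑ w ∈ s, (R.blockedSteps w T).card
      = ∑ w ∈ s, ((Finset.range T).bipartiteAbove
          (fun w τ => R.state w τ ∉ R.avail (τ + 1)) w).card := rfl
    _ = ∑ τ ∈ Finset.range T, (s.bipartiteBelow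
          (fun w τ => R.state w τ ∉ R.avail (τ + 1)) τ).card :=
        Finset.sum_card_bipartiteAbove_eq_sum_card_bipartiteBelow _
    _ ≤ ∑ _τ ∈ Finset.range T, 2 * k := Finset.sum_le_sum fun τ hτ =>
        card_filter_blocked_le hdef (hs.trans (R.active_anti (Finset.mem_range.1 hτ).le))
          ((Finset.mem_range.1 hτ).trans_le hT)
    _ = T * (2 * k) := by simp

theorem ncard_active_mul_le {k : ℕ} (hdef : R.KDeficient k) {T : ℕ} (hT : T < N) :
    (R.active T).ncard * (T + 1) ≤ 2 * N + T * (2 * k) := by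
  obtain ⟨s, hs⟩ := (R.active T).toFinite.exists_finset_coe
  rw [← hs, Set.ncard_coe_finset]
  calc s.card * (T + 1)
      = ∑ w ∈ s, ((R.visited w T).ncard + (R.blockedSteps w T).card) := by
        rw [Finset.sum_congr rfl fun w _ => R.ncard_visited_add_card_blockedSteps w hT,
          Finset.sum_const, smul_eq_mul]
    _ = ∑ w ∈ s, (R.visited w T).ncard + ∑ w ∈ s, (R.blockedSteps w T).card :=
        Finset.sum_add_distrib
    _ ≤ 2 * N + T * (2 * k) :=
        add_le_add (hs ▸ R.isIrredundant_active T).sum_ncard_le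
          (sum_card_blockedSteps_le hdef hs.le hT.le)

end Roundabout

/-- **Corollary (few active agents).** In the `k`-deficient roundabout model with
`k ≥ 1`, at most `6k` agents remain active after `⌊N/(2k)⌋` steps. -/
theorem roundabout_active_agents {N : ℕ} [NeZero N] (k : ℕ) (hk : 1 ≤ k)
    (R : Roundabout N) (hdef : R.KDeficient k) :
    (R.active (N / (2 * k))).ncard ≤ 6 * k := by
  set T := N / (2 * k)
  have hTN : T < N := Nat.div_lt_self N.pos_of_neZero (by omega)
  have hN : N < (T + 1) * (2 * k) := (Nat.div_lt_iff_lt_mul (by omega)).1 (Nat.lt_succ_self T)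
  have hcount := R.ncard_active_mul_le hdef hTN
  have : (R.active T).ncard * (T + 1) < 6 * k * (T + 1) := by linarith
  exact (Nat.lt_of_mul_lt_mul_right this).le
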